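/- arXiv:1511.00879 — 2 statements merged into one kernel-verified Lean document; each statement's English description precedes it below -/
import Mathlib

section
/- In the braid group B_{m+1} with Artin generators σ_1, …, σ_m, the normal subgroup generated by the squares σ_1², …, σ_m² equals the pure braid group P_{m+1}, i.e. the kernel of the canonical surjection B_{m+1} → S_{m+1} sending σ_i to the transposition (i, i+1). -/
/-- The set of braid relations on `m` Artin generators `σ_1, …, σ_m` (indexed by `Fin m`):
commutation `σ_i σ_j = σ_j σ_i` for `|i − j| ≥ 2` and the braid relation
`σ_i σ_{i+1} σ_i = σ_{i+1} σ_i σ_{i+1}`. -/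
def braidRels (m : ℕ) : Set (FreeGroup (Fin m)) :=
  { r | (∃ i j : Fin m, (i : ℕ) + 2 ≤ (j : ℕ) ∧
          r = FreeGroup.of i * FreeGroup.of j * (FreeGroup.of i)⁻¹ * (FreeGroup.of j)⁻¹) ∨
        (∃ i j : Fin m, (i : ℕ) + 1 = (j : ℕ) ∧
          r = FreeGroup.of i * FreeGroup.of j * FreeGroup.of i *
              (FreeGroup.of j * FreeGroup.of i * FreeGroup.of j)⁻¹) }

/-- The braid group `B_{m+1}` on `m+1` strands, presented with `m` Artin generators. -/
def BraidGroup (m : ℕ) : Type := PresentedGroup (braidRels m)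

instance (m : ℕ) : Group (BraidGroup m) := by unfold BraidGroup; infer_instance

/-!
The squares `σ_i²` map to `1` in `S_{m+1}`, so their normal closure `N` lies in the pure braid
group. Conversely, the images of the `σ_i` in `B_{m+1} ⧸ N` satisfy the Coxeter relations of
type `A_m`, and any group generated by such elements `t_0, …, t_n` has at most `(n + 2)!`
elements: every element of `⟨t_0, …, t_n⟩` is `g * t_n * t_(n-1) * ⋯ * t_(n+1-k)` with
`g ∈ ⟨t_0, …, t_(n-1)⟩` and `k ≤ n + 1`. So `N` has index at most `(m + 1)!`, the index of the
pure braid group, and the two subgroups coincide.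
-/

open Subgroup Set

section CoxeterRelations

variable {G : Type*} [Group G]

/-- Relations among `t 0, …, t (n - 1)` only; the family is indexed by `ℕ` so that index
arithmetic stays in `ℕ`. -/
structure SatisfiesBraidRelations (t : ℕ → G) (n : ℕ) : Prop where
  commute : ∀ i j, i + 2 ≤ j → j < n → Commute (t i) (t j)
  braid : ∀ i, i + 1 < n → t i * t (i + 1) * t i = t (i + 1) * t i * t (i + 1)

structure SatisfiesCoxeterRelations (t : ℕ → G) (n : ℕ) : Prop
    extends SatisfiesBraidRelations t n where
  mul_self : ∀ i < n, t i * t i = 1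

variable {t : ℕ → G} {n : ℕ}

theorem SatisfiesBraidRelations.map {H : Type*} [Group H] (h : SatisfiesBraidRelations t n)
    (f : G →* H) : SatisfiesBraidRelations (f ∘ t) n where
  commute i j hij hj := (h.commute i j hij hj).map f
  braid i hi := by simp only [Function.comp_apply, ← map_mul, h.braid i hi]

theorem SatisfiesCoxeterRelations.mono {n' : ℕ} (h : SatisfiesCoxeterRelations t n)
    (hle : n' ≤ n) : SatisfiesCoxeterRelations t n' where
  commute i j hij hj := h.commute i j hij (by omega)
  braid i hi := h.braid i (by omega)
  mul_self i hi := h.mul_self i (by omega)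

/-- `descendingProduct t n k = t n * t (n - 1) * ⋯ * t (n + 1 - k)`. For `k ≤ n + 1` these play
the role of the right coset representatives of `S_{n+1}` in `S_{n+2}`. -/
def descendingProduct (t : ℕ → G) (n : ℕ) : ℕ → G
  | 0 => 1
  | k + 1 => descendingProduct t n k * t (n - k)

namespace SatisfiesBraidRelations

variable (h : SatisfiesBraidRelations t (n + 1))
include h

theorem commute_descendingProduct {i k : ℕ} (hik : i + k + 1 ≤ n) :
    Commute (t i) (descendingProduct t n k) := by
  induction k with
  | zero => exact Commute.one_right _
  | succ k ih => exact (ih (by omega)).mul_right (h.commute i (n - k) (by omega) (by omega))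

theorem descendingProduct_mul_succ {j k : ℕ} (hj : j < n) (hjk : n + 1 ≤ j + k)
    (hk : k ≤ n + 1) : descendingProduct t n k * t (j + 1) = t j * descendingProduct t n k := by
  induction k with
  | zero => omega
  | succ k ih =>
    rcases (show j + k = n ∨ n + 1 ≤ j + k by omega) with hjk' | hjk'
    · obtain ⟨k, rfl⟩ : ∃ l, k = l + 1 := ⟨k - 1, by omega⟩
      have hcomm := (h.commute_descendingProduct (i := j) (k := k) (by omega)).eq
      simp only [descendingProduct, show n - (k + 1) = j by omega, show n - k = j + 1 by omega]
      calc descendingProduct t n k * t (j + 1) * t j * t (j + 1)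
          = descendingProduct t n k * t j * t (j + 1) * t j := by
            simp only [mul_assoc, h.braid j (by omega)]
        _ = t j * (descendingProduct t n k * t (j + 1) * t j) := by
            rw [← hcomm]; simp only [mul_assoc]
    · rw [descendingProduct, mul_assoc,
        (h.commute (n - k) (j + 1) (by omega) (by omega)).eq, ← mul_assoc,
        ih (by omega) (by omega), mul_assoc]

end SatisfiesBraidRelations

namespace SatisfiesCoxeterRelations

theorem exists_descendingProduct_mul (h : SatisfiesCoxeterRelations t (n + 1)) {i k : ℕ}
    (hi : i ≤ n) (hk : k ≤ n + 1) : ∃ g ∈ closure (t '' Iio n), ∃ k' ≤ n + 1,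
      descendingProduct t n k * t i = g * descendingProduct t n k' := by
  rcases (show i + k < n ∨ i + k = n ∨ i + k = n + 1 ∨ n + 2 ≤ i + k by omega)
    with hlt | heq | heq | hgt
  · exact ⟨t i, subset_closure ⟨i, mem_Iio.mpr (by omega), rfl⟩, k, hk,
      (h.commute_descendingProduct (by omega)).eq.symm⟩
  · refine ⟨1, one_mem _, k + 1, by omega, ?_⟩
    rw [one_mul, descendingProduct, show n - k = i by omega]
  · obtain ⟨k, rfl⟩ : ∃ l, k = l + 1 := ⟨k - 1, by omega⟩
    refine ⟨1, one_mem _, k, by omega, ?_⟩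
    rw [one_mul, descendingProduct, show n - k = i by omega, mul_assoc, h.mul_self i (by omega),
      mul_one]
  · obtain ⟨j, rfl⟩ : ∃ j, i = j + 1 := ⟨i - 1, by omega⟩
    exact ⟨t j, subset_closure ⟨j, mem_Iio.mpr (by omega), rfl⟩, k, hk,
      h.descendingProduct_mul_succ (by omega) (by omega) hk⟩

theorem exists_mem_closure_mul_descendingProduct (h : SatisfiesCoxeterRelations t (n + 1))
    {x : G} (hx : x ∈ closure (t '' Iio (n + 1))) :
    ∃ g ∈ closure (t '' Iio n), ∃ k ≤ n + 1, x = g * descendingProduct t n k := by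
  have step : ∀ x, (∃ g ∈ closure (t '' Iio n), ∃ k ≤ n + 1, x = g * descendingProduct t n k) →
      ∀ i < n + 1, ∃ g ∈ closure (t '' Iio n), ∃ k ≤ n + 1,
        x * t i = g * descendingProduct t n k := by
    rintro _ ⟨g, hg, k, hk, rfl⟩ i hi
    obtain ⟨g', hg', k', hk', he⟩ := h.exists_descendingProduct_mul (by omega : i ≤ n) hk
    exact ⟨g * g', mul_mem hg hg', k', hk', by rw [mul_assoc, he, mul_assoc]⟩
  induction hx using closure_induction_right with
  | one => exact ⟨1, one_mem _, 0, by omega, by rw [descendingProduct, mul_one]⟩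
  | mul_right x _ _ hy ih =>
    obtain ⟨i, hi, rfl⟩ := hy
    exact step x ih i hi
  | mul_inv_cancel x _ _ hy ih =>
    obtain ⟨i, hi, rfl⟩ := hy
    rw [inv_eq_of_mul_eq_one_right (h.mul_self i hi)]
    exact step x ih i hi

theorem exists_finset_closure_subset : ∀ {n : ℕ}, SatisfiesCoxeterRelations t n →
    ∃ S : Finset G, (closure (t '' Iio n) : Set G) ⊆ S ∧ S.card ≤ (n + 1).factorial
  | 0, _ => ⟨{1}, by simp, by simp⟩
  | n + 1, h => by
    classical
    obtain ⟨S, hS, hcard⟩ := exists_finset_closure_subset (h.mono n.le_succ)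
    refine ⟨(S ×ˢ Finset.range (n + 2)).image fun p => p.1 * descendingProduct t n p.2,
      fun x hx => ?_, ?_⟩
    · obtain ⟨g, hg, k, hk, rfl⟩ := h.exists_mem_closure_mul_descendingProduct hx
      exact Finset.mem_image.mpr
        ⟨(g, k), Finset.mem_product.mpr ⟨hS hg, Finset.mem_range.mpr (by omega)⟩, rfl⟩
    · calc _ ≤ (S ×ˢ Finset.range (n + 2)).card := Finset.card_image_le
        _ = S.card * (n + 2) := by rw [Finset.card_product, Finset.card_range]
        _ ≤ (n + 1).factorial * (n + 2) := Nat.mul_le_mul_right _ hcard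
        _ = (n + 2).factorial := by rw [Nat.factorial_succ (n + 1), mul_comm]

theorem finite_and_card_le (h : SatisfiesCoxeterRelations t n)
    (hgen : closure (t '' Iio n) = ⊤) : Finite G ∧ Nat.card G ≤ (n + 1).factorial := by
  obtain ⟨S, hS, hcard⟩ := h.exists_finset_closure_subset
  rw [hgen, coe_top] at hS
  have : Finite G := Set.finite_univ_iff.mp (S.finite_toSet.subset hS)
  refine ⟨this, ?_⟩
  calc Nat.card G = (univ : Set G).ncard := Set.ncard_univ G |>.symm
    _ ≤ (S : Set G).ncard := Set.ncard_le_ncard hS S.finite_toSet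
    _ = S.card := Set.ncard_coe_finset S
    _ ≤ _ := hcard

end SatisfiesCoxeterRelations

end CoxeterRelations

theorem Subgroup.eq_of_le_of_index_le {G : Type*} [Group G] {H K : Subgroup G} [H.FiniteIndex]
    (hle : H ≤ K) (hindex : H.index ≤ K.index) : H = K :=
  hle.eq_of_not_lt fun hlt => (index_strictAnti hlt).not_ge hindex

theorem Equiv.Perm.surjective_of_swap_castSucc_succ_mem_range {G : Type*} [Group G] {m : ℕ}
    (f : G →* Equiv.Perm (Fin (m + 1)))
    (hf : ∀ i : Fin m, Equiv.swap i.castSucc i.succ ∈ Set.range f) : Function.Surjective f := by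
  rw [← MonoidHom.mrange_eq_top, eq_top_iff, ← Equiv.Perm.mclosure_swap_castSucc_succ,
    Submonoid.closure_le]
  rintro _ ⟨i, rfl⟩
  exact hf i

namespace BraidGroup

/-- The Artin generator `σ_{i+1}` for `i < m`, and `1` otherwise. -/
def gen (m i : ℕ) : PresentedGroup (braidRels m) :=
  if h : i < m then PresentedGroup.of ⟨i, h⟩ else 1

theorem gen_of_lt {m i : ℕ} (h : i < m) : gen m i = PresentedGroup.of ⟨i, h⟩ := dif_pos h

theorem satisfiesBraidRelations_gen (m : ℕ) : SatisfiesBraidRelations (gen m) m where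
  commute i j hij hj := by
    rw [gen_of_lt (by omega), gen_of_lt hj, ← commutatorElement_eq_one_iff_commute]
    exact PresentedGroup.one_of_mem (Or.inl ⟨⟨i, by omega⟩, ⟨j, hj⟩, hij, rfl⟩)
  braid i hi := by
    rw [gen_of_lt (by omega), gen_of_lt hi, ← mul_inv_eq_one]
    exact PresentedGroup.one_of_mem (Or.inr ⟨⟨i, by omega⟩, ⟨i + 1, hi⟩, rfl, rfl⟩)

theorem image_gen_Iio (m : ℕ) : gen m '' Iio m = range PresentedGroup.of := by
  ext x
  constructor
  · rintro ⟨i, hi, rfl⟩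
    exact ⟨⟨i, hi⟩, (gen_of_lt hi).symm⟩
  · rintro ⟨i, rfl⟩
    exact ⟨i, i.isLt, gen_of_lt i.isLt⟩

theorem finite_and_card_quotient_le_of_sq_mem {m : ℕ}
    (N : Subgroup (PresentedGroup (braidRels m))) [N.Normal]
    (hN : ∀ i : Fin m, PresentedGroup.of i ^ 2 ∈ N) :
    Finite (PresentedGroup (braidRels m) ⧸ N) ∧
      Nat.card (PresentedGroup (braidRels m) ⧸ N) ≤ (m + 1).factorial := by
  have hcox : SatisfiesCoxeterRelations (QuotientGroup.mk' N ∘ gen m) m :=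
    { (satisfiesBraidRelations_gen m).map (QuotientGroup.mk' N) with
      mul_self i hi := by
        rw [Function.comp_apply, ← map_mul, ← sq, QuotientGroup.mk'_apply,
          QuotientGroup.eq_one_iff, gen_of_lt hi]
        exact hN _ }
  refine hcox.finite_and_card_le ?_
  rw [image_comp, ← MonoidHom.map_closure, image_gen_Iio, PresentedGroup.closure_range_of,
    ← MonoidHom.range_eq_map, MonoidHom.range_eq_top]
  exact QuotientGroup.mk'_surjective N

end BraidGroup

/-- In `B_{m+1}`, the normal closure of the squares `σ_1², …, σ_m²` of the
Artin generators equals the pure braid group `P_{m+1}`, i.e. the kernel of the canonical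
surjection `B_{m+1} → S_{m+1}` sending `σ_i` to the transposition `(i, i+1)`. -/
theorem normalClosure_squares_eq_pureBraidGroup (m : ℕ)
    (π : BraidGroup m →* Equiv.Perm (Fin (m + 1)))
    (hπ : ∀ i : Fin m, π (PresentedGroup.of i) = Equiv.swap i.castSucc i.succ) :
    Subgroup.normalClosure
        (Set.range fun i : Fin m => (PresentedGroup.of (rels := braidRels m) i) ^ 2)
      = π.ker := by
  -- `BraidGroup m` has its own `Group` instance; work with `π` on the presented group instead.
  let π' : PresentedGroup (braidRels m) →* Equiv.Perm (Fin (m + 1)) := π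
  have hπ' : ∀ i : Fin m, π' (PresentedGroup.of i) = Equiv.swap i.castSucc i.succ := hπ
  change _ = π'.ker
  set N := normalClosure (range fun i : Fin m => (PresentedGroup.of (rels := braidRels m) i) ^ 2)
  obtain ⟨hfin, hcard⟩ :=
    BraidGroup.finite_and_card_quotient_le_of_sq_mem N fun i => subset_normalClosure ⟨i, rfl⟩
  have : N.FiniteIndex := finiteIndex_of_finite_quotient
  have hle : N ≤ π'.ker := by
    refine normalClosure_le_normal ?_
    rintro _ ⟨i, rfl⟩
    rw [SetLike.mem_coe, MonoidHom.mem_ker, map_pow, hπ', sq, Equiv.swap_mul_self]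
  have hsurj : Function.Surjective π' :=
    Equiv.Perm.surjective_of_swap_castSucc_succ_mem_range π' fun i => ⟨_, hπ' i⟩
  refine eq_of_le_of_index_le hle ?_
  rwa [index_eq_card, index_ker, MonoidHom.range_eq_top.mpr hsurj, card_top, Nat.card_perm,
    Nat.card_fin]
end

section
/- Let A be a free ℤ/2-algebra on a single generating set and consider the 'stabilization' of a dga (A, ∂): the dga (A', ∂') obtained by adjoining two new generators x, y to the generating set with ∂'(x) = y, ∂'(y) = 0 and ∂' = ∂ on old generators, extended by the Leibniz rule. Then for any augmentation ε' of (A', ∂'), the linearized homology of (A', ∂') with respect to ε' is isomorphic to the linearized homology of (A, ∂) with respect to the restriction of ε' to A. -/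
/-!
The span of the old generators is a subcomplex `i` of the linearized complex of the
stabilization, and forgetting `x, y` is a chain map `p` back with `p ∘ i = id`. The map
`h : y ↦ x` is a chain homotopy `∂' h + h ∂' = id - i ∘ p`: the only non-trivial point is
`∂^{ε'} x = π₁ (y + ε'(y)) = y`, which holds because `ε'(y) = ε'(∂' x) = 0`. A strong
deformation retraction induces an isomorphism on homology.
-/

open MonoidAlgebra

/-- The semi-free unital `ℤ/2`-algebra on a generating set `S` (words on `S` form a basis). -/
abbrev SemiFreeAlg (S : Type*) := MonoidAlgebra (ZMod 2) (FreeMonoid S)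

noncomputable def genOf {S : Type*} (a : S) : SemiFreeAlg S :=
  MonoidAlgebra.of (ZMod 2) (FreeMonoid S) (FreeMonoid.of a)

/-- The projection `π₁` onto the span of length-one words. -/
noncomputable def projOne (S : Type*) : SemiFreeAlg S →ₗ[ZMod 2] (S →₀ ZMod 2) :=
  Finsupp.lcomapDomain FreeMonoid.of FreeMonoid.of_injective ∘ₗ
    (MonoidAlgebra.coeffLinearEquiv (ZMod 2)).toLinearMap

noncomputable def embOne (S : Type*) : (S →₀ ZMod 2) →ₗ[ZMod 2] SemiFreeAlg S :=
  (MonoidAlgebra.coeffLinearEquiv (ZMod 2)).symm.toLinearMap ∘ₗ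
    Finsupp.lmapDomain (ZMod 2) (ZMod 2) FreeMonoid.of

abbrev lhomology {V : Type*} [AddCommGroup V] [Module (ZMod 2) V]
    (d : V →ₗ[ZMod 2] V) :=
  LinearMap.ker d ⧸ Submodule.comap (LinearMap.ker d).subtype (LinearMap.range d)

section Retract

variable {V W : Type*} [AddCommGroup V] [Module (ZMod 2) V] [AddCommGroup W] [Module (ZMod 2) W]
  {D' : V →ₗ[ZMod 2] V} {D : W →ₗ[ZMod 2] W} {i : W →ₗ[ZMod 2] V} {p : V →ₗ[ZMod 2] W}

lemma apply_mem_ker_of_comp_eq (hp : p ∘ₗ D' = D ∘ₗ p) {w : V} (hw : w ∈ LinearMap.ker D') :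
    p w ∈ LinearMap.ker D := by
  rw [LinearMap.mem_ker, ← LinearMap.comp_apply, ← hp, LinearMap.comp_apply,
    LinearMap.mem_ker.mp hw, map_zero]

noncomputable def cyclesToLhomology (hp : p ∘ₗ D' = D ∘ₗ p) :
    LinearMap.ker D' →ₗ[ZMod 2] lhomology D :=
  Submodule.mkQ _ ∘ₗ p.restrict fun _ => apply_mem_ker_of_comp_eq hp

lemma cyclesToLhomology_surjective (hp : p ∘ₗ D' = D ∘ₗ p) (hi : D' ∘ₗ i = i ∘ₗ D)
    (hpi : p ∘ₗ i = LinearMap.id) : Function.Surjective (cyclesToLhomology hp) := by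
  intro c
  obtain ⟨v, rfl⟩ := Submodule.mkQ_surjective _ c
  exact ⟨⟨i v, apply_mem_ker_of_comp_eq hi.symm v.2⟩,
    congrArg (Submodule.mkQ _) (Subtype.ext (LinearMap.congr_fun hpi v))⟩

lemma ker_cyclesToLhomology (hp : p ∘ₗ D' = D ∘ₗ p) (hi : D' ∘ₗ i = i ∘ₗ D) {h : V →ₗ[ZMod 2] V}
    (hh : D' ∘ₗ h + h ∘ₗ D' = LinearMap.id - i ∘ₗ p) :
    LinearMap.ker (cyclesToLhomology hp)
      = Submodule.comap (LinearMap.ker D').subtype (LinearMap.range D') := by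
  ext ⟨w, hw⟩
  simp only [LinearMap.mem_ker, cyclesToLhomology, LinearMap.comp_apply, Submodule.mkQ_apply,
    Submodule.Quotient.mk_eq_zero, Submodule.mem_comap, Submodule.subtype_apply,
    LinearMap.coe_restrict_apply, LinearMap.mem_range]
  constructor
  · rintro ⟨v, hv⟩
    -- the homotopy at the cycle `w` reads `w = D' (h w) + i (p w)`
    have hw' := LinearMap.congr_fun hh w
    simp only [LinearMap.add_apply, LinearMap.comp_apply, LinearMap.mem_ker.mp hw, map_zero,
      add_zero, LinearMap.sub_apply, LinearMap.id_apply] at hw'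
    refine ⟨h w + i v, ?_⟩
    rw [map_add, hw', ← LinearMap.comp_apply D' i, hi, LinearMap.comp_apply, hv, sub_add_cancel]
  · rintro ⟨u, rfl⟩
    exact ⟨p u, by rw [← LinearMap.comp_apply D p, ← hp, LinearMap.comp_apply]⟩

noncomputable def lhomologyEquivOfRetract (hp : p ∘ₗ D' = D ∘ₗ p) (hi : D' ∘ₗ i = i ∘ₗ D)
    (hpi : p ∘ₗ i = LinearMap.id) {h : V →ₗ[ZMod 2] V}
    (hh : D' ∘ₗ h + h ∘ₗ D' = LinearMap.id - i ∘ₗ p) : lhomology D' ≃ₗ[ZMod 2] lhomology D :=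
  (Submodule.quotEquivOfEq _ _ (ker_cyclesToLhomology hp hi hh).symm).trans
    ((cyclesToLhomology hp).quotKerEquivOfSurjective (cyclesToLhomology_surjective hp hi hpi))

end Retract

section SemiFree

variable {S T : Type*}

lemma SemiFreeAlg.algHom_ext {B : Type*} [Semiring B] [Algebra (ZMod 2) B]
    {f g : SemiFreeAlg S →ₐ[ZMod 2] B} (h : ∀ a, f (genOf a) = g (genOf a)) : f = g :=
  MonoidAlgebra.algHom_ext' (FreeMonoid.hom_eq h) (Subsingleton.elim _ _)

lemma projOne_genOf (a : S) : projOne S (genOf a) = Finsupp.single a 1 := by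
  ext t
  exact Finsupp.single_apply_left FreeMonoid.of_injective _ _ _

lemma embOne_single_one (a : S) : embOne S (Finsupp.single a 1) = genOf a := by
  simp [embOne, genOf, Finsupp.mapDomain_single]

/-- The linearized differential `∂^ε = π₁ ∘ φ^ε ∘ ∂` restricted to the span of the generators. -/
noncomputable abbrev linearizedDiff (φ : SemiFreeAlg S ≃ₐ[ZMod 2] SemiFreeAlg S)
    (d : SemiFreeAlg S →ₗ[ZMod 2] SemiFreeAlg S) : (S →₀ ZMod 2) →ₗ[ZMod 2] (S →₀ ZMod 2) :=
  projOne S ∘ₗ φ.toLinearMap ∘ₗ d ∘ₗ embOne S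

lemma linearizedDiff_single_one (φ : SemiFreeAlg S ≃ₐ[ZMod 2] SemiFreeAlg S)
    (d : SemiFreeAlg S →ₗ[ZMod 2] SemiFreeAlg S) (a : S) :
    linearizedDiff φ d (Finsupp.single a 1) = projOne S (φ (d (genOf a))) := by
  simp [embOne_single_one]

lemma FreeMonoid.map_injective_of_injective {f : S → T} (hf : Function.Injective f) :
    Function.Injective (FreeMonoid.map f) := fun _ _ h =>
  FreeMonoid.toList.injective (List.map_injective_iff.mpr hf (congrArg FreeMonoid.toList h))

lemma FreeMonoid.mem_range_of_map_eq_of {f : S → T} {w : FreeMonoid S} {t : T}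
    (h : FreeMonoid.map f w = FreeMonoid.of t) : t ∈ Set.range f := by
  obtain ⟨s, -, hs⟩ := FreeMonoid.mem_map.mp (h ▸ FreeMonoid.mem_of_self)
  exact ⟨s, hs⟩

lemma projOne_mapDomain {f : S → T} (hf : Function.Injective f) (z : SemiFreeAlg S) :
    projOne T (MonoidAlgebra.mapDomain (FreeMonoid.map f) z)
      = Finsupp.mapDomain f (projOne S z) := by
  ext t
  by_cases ht : t ∈ Set.range f
  · obtain ⟨s, rfl⟩ := ht
    rw [Finsupp.mapDomain_apply hf]
    exact Finsupp.mapDomain_apply (FreeMonoid.map_injective_of_injective hf) _ (FreeMonoid.of s)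
  · rw [Finsupp.mapDomain_of_notMem_range _ _ ht]
    exact Finsupp.mapDomain_of_notMem_range _ _
      fun ⟨w, hw⟩ => ht (FreeMonoid.mem_range_of_map_eq_of hw)

lemma projOne_apply_of_map_genOf {f : S → T} (hf : Function.Injective f)
    {incl : SemiFreeAlg S →ₐ[ZMod 2] SemiFreeAlg T} (hincl : ∀ a, incl (genOf a) = genOf (f a))
    (z : SemiFreeAlg S) : projOne T (incl z) = Finsupp.mapDomain f (projOne S z) := by
  have : incl = MonoidAlgebra.mapDomainAlgHom (ZMod 2) (ZMod 2) (FreeMonoid.map f) :=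
    SemiFreeAlg.algHom_ext fun a => by rw [hincl]; simp [genOf]
  rw [this]
  exact projOne_mapDomain hf z

end SemiFree

namespace Stabilization

variable {S : Type*}

noncomputable def inclOne : (S →₀ ZMod 2) →ₗ[ZMod 2] ((S ⊕ Bool) →₀ ZMod 2) :=
  Finsupp.lmapDomain (ZMod 2) (ZMod 2) Sum.inl

noncomputable def restrOne : ((S ⊕ Bool) →₀ ZMod 2) →ₗ[ZMod 2] (S →₀ ZMod 2) :=
  Finsupp.lcomapDomain Sum.inl Sum.inl_injective

/-- The homotopy `y ↦ x`, where `x = Sum.inr true` and `y = Sum.inr false`. -/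
noncomputable def homotopy : ((S ⊕ Bool) →₀ ZMod 2) →ₗ[ZMod 2] ((S ⊕ Bool) →₀ ZMod 2) :=
  Finsupp.lsingle (Sum.inr true) ∘ₗ Finsupp.lapply (Sum.inr false)

@[simp] lemma restrOne_inclOne (v : S →₀ ZMod 2) : restrOne (inclOne v) = v :=
  Finsupp.comapDomain_mapDomain _ Sum.inl_injective v

@[simp] lemma inclOne_single (a : S) (c : ZMod 2) :
    inclOne (Finsupp.single a c) = Finsupp.single (Sum.inl a) c :=
  Finsupp.mapDomain_single

@[simp] lemma restrOne_single_inl (a : S) (c : ZMod 2) :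
    restrOne (Finsupp.single (Sum.inl a) c) = Finsupp.single a c :=
  Finsupp.comapDomain_single _ _ _ _

@[simp] lemma restrOne_single_inr (b : Bool) (c : ZMod 2) :
    restrOne (Finsupp.single (Sum.inr b : S ⊕ Bool) c) = 0 := by
  ext; simp [restrOne]

@[simp] lemma inclOne_apply_inr (v : S →₀ ZMod 2) (b : Bool) : inclOne v (Sum.inr b) = 0 :=
  Finsupp.mapDomain_of_notMem_range _ _ (by simp)

@[simp] lemma homotopy_apply (w : (S ⊕ Bool) →₀ ZMod 2) :
    homotopy w = Finsupp.single (Sum.inr true) (w (Sum.inr false)) :=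
  rfl

section Homotopy

variable {D : (S →₀ ZMod 2) →ₗ[ZMod 2] (S →₀ ZMod 2)}
  {D' : ((S ⊕ Bool) →₀ ZMod 2) →ₗ[ZMod 2] ((S ⊕ Bool) →₀ ZMod 2)}

lemma apply_single_inl_of_comp_inclOne (hinl : D' ∘ₗ inclOne = inclOne ∘ₗ D) (a : S) :
    D' (Finsupp.single (Sum.inl a) 1) = inclOne (D (Finsupp.single a 1)) := by
  simpa using LinearMap.congr_fun hinl (Finsupp.single a 1)

lemma restrOne_comp_eq (hinl : D' ∘ₗ inclOne = inclOne ∘ₗ D)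
    (hx : D' (Finsupp.single (Sum.inr true) 1) = Finsupp.single (Sum.inr false) 1)
    (hy : D' (Finsupp.single (Sum.inr false) 1) = 0) : restrOne ∘ₗ D' = D ∘ₗ restrOne := by
  refine Finsupp.lhom_ext' fun s => LinearMap.ext_ring ?_
  rcases s with a | _ | _
  · simp [apply_single_inl_of_comp_inclOne hinl]
  · simp [hy]
  · simp [hx]

lemma homotopy_eq (hinl : D' ∘ₗ inclOne = inclOne ∘ₗ D)
    (hx : D' (Finsupp.single (Sum.inr true) 1) = Finsupp.single (Sum.inr false) 1)
    (hy : D' (Finsupp.single (Sum.inr false) 1) = 0) :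
    D' ∘ₗ homotopy + homotopy ∘ₗ D' = LinearMap.id - inclOne ∘ₗ restrOne := by
  refine Finsupp.lhom_ext' fun s => LinearMap.ext_ring ?_
  rcases s with a | _ | _
  · simp [apply_single_inl_of_comp_inclOne hinl]
  · simp [hx, hy]
  · simp [hx]

end Homotopy

section Linearized

variable {d : SemiFreeAlg S →ₗ[ZMod 2] SemiFreeAlg S}
  {d' : SemiFreeAlg (S ⊕ Bool) →ₗ[ZMod 2] SemiFreeAlg (S ⊕ Bool)}
  {ε' : SemiFreeAlg (S ⊕ Bool) →ₐ[ZMod 2] ZMod 2}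
  {φ' : SemiFreeAlg (S ⊕ Bool) ≃ₐ[ZMod 2] SemiFreeAlg (S ⊕ Bool)}

lemma linearizedDiff_comp_inclOne {incl : SemiFreeAlg S →ₐ[ZMod 2] SemiFreeAlg (S ⊕ Bool)}
    (hincl : ∀ a : S, incl (genOf a) = genOf (Sum.inl a))
    (hcompat : ∀ x, d' (incl x) = incl (d x))
    {φ : SemiFreeAlg S ≃ₐ[ZMod 2] SemiFreeAlg S}
    (hφ : ∀ a : S, φ (genOf a)
        = genOf a + algebraMap (ZMod 2) (SemiFreeAlg S) (ε' (incl (genOf a))))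
    (hφ' : ∀ a : S ⊕ Bool, φ' (genOf a)
        = genOf a + algebraMap (ZMod 2) (SemiFreeAlg (S ⊕ Bool)) (ε' (genOf a))) :
    linearizedDiff φ' d' ∘ₗ inclOne = inclOne ∘ₗ linearizedDiff φ d := by
  have hφ'_incl : (φ' : _ →ₐ[ZMod 2] _).comp incl = incl.comp φ :=
    SemiFreeAlg.algHom_ext fun a => show φ' (incl (genOf a)) = incl (φ (genOf a)) by
      rw [hφ, map_add, AlgHom.commutes, hincl, hφ']
  refine Finsupp.lhom_ext' fun a => LinearMap.ext_ring ?_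
  show linearizedDiff φ' d' (inclOne (Finsupp.single a 1))
    = inclOne (linearizedDiff φ d (Finsupp.single a 1))
  calc linearizedDiff φ' d' (inclOne (Finsupp.single a 1))
      = projOne _ (φ' (d' (incl (genOf a)))) := by
        rw [inclOne_single, linearizedDiff_single_one, hincl]
    _ = projOne _ (incl (φ (d (genOf a)))) := by
        rw [hcompat]; exact congrArg _ (AlgHom.congr_fun hφ'_incl _)
    _ = inclOne (linearizedDiff φ d (Finsupp.single a 1)) := by
        rw [projOne_apply_of_map_genOf Sum.inl_injective hincl, linearizedDiff_single_one]; rfl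

lemma linearizedDiff_single_x
    (hx : d' (genOf (Sum.inr true)) = genOf (Sum.inr false)) (hε' : ∀ x, ε' (d' x) = 0)
    (hφ' : ∀ a : S ⊕ Bool, φ' (genOf a)
        = genOf a + algebraMap (ZMod 2) (SemiFreeAlg (S ⊕ Bool)) (ε' (genOf a))) :
    linearizedDiff φ' d' (Finsupp.single (Sum.inr true) 1) = Finsupp.single (Sum.inr false) 1 := by
  have hεy : ε' (genOf (Sum.inr false)) = 0 := hx ▸ hε' _
  rw [linearizedDiff_single_one, hx, hφ', hεy, map_zero, add_zero, projOne_genOf]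

lemma linearizedDiff_single_y (hy : d' (genOf (Sum.inr false)) = 0) :
    linearizedDiff φ' d' (Finsupp.single (Sum.inr false) 1) = 0 := by
  rw [linearizedDiff_single_one, hy, map_zero, map_zero]

end Linearized

end Stabilization

theorem linearized_homology_invariant_under_stabilization_general
    {S : Type*}
    (incl : SemiFreeAlg S →ₐ[ZMod 2] SemiFreeAlg (S ⊕ Bool))
    (hincl : ∀ a : S, incl (genOf a) = genOf (Sum.inl a))
    (d : SemiFreeAlg S →ₗ[ZMod 2] SemiFreeAlg S)
    (d' : SemiFreeAlg (S ⊕ Bool) →ₗ[ZMod 2] SemiFreeAlg (S ⊕ Bool))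
    (hx : d' (genOf (Sum.inr true)) = genOf (Sum.inr false))
    (hy : d' (genOf (Sum.inr false)) = 0)
    (hcompat : ∀ x, d' (incl x) = incl (d x))
    (ε' : SemiFreeAlg (S ⊕ Bool) →ₐ[ZMod 2] ZMod 2)
    (hε' : ∀ x, ε' (d' x) = 0)
    (φ : SemiFreeAlg S ≃ₐ[ZMod 2] SemiFreeAlg S)
    (hφ : ∀ a : S, φ (genOf a)
        = genOf a + algebraMap (ZMod 2) (SemiFreeAlg S) (ε' (incl (genOf a))))
    (φ' : SemiFreeAlg (S ⊕ Bool) ≃ₐ[ZMod 2] SemiFreeAlg (S ⊕ Bool))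
    (hφ' : ∀ a : S ⊕ Bool, φ' (genOf a)
        = genOf a + algebraMap (ZMod 2) (SemiFreeAlg (S ⊕ Bool)) (ε' (genOf a))) :
    Nonempty
      (lhomology (projOne (S ⊕ Bool) ∘ₗ φ'.toLinearMap ∘ₗ d' ∘ₗ embOne (S ⊕ Bool))
        ≃ₗ[ZMod 2]
       lhomology (projOne S ∘ₗ φ.toLinearMap ∘ₗ d ∘ₗ embOne S)) := by
  have hinl := Stabilization.linearizedDiff_comp_inclOne hincl hcompat hφ hφ'
  have hxD := Stabilization.linearizedDiff_single_x hx hε' hφ'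
  have hyD := Stabilization.linearizedDiff_single_y (φ' := φ') hy
  exact ⟨lhomologyEquivOfRetract (Stabilization.restrOne_comp_eq hinl hxD hyD) hinl
    (LinearMap.ext Stabilization.restrOne_inclOne) (Stabilization.homotopy_eq hinl hxD hyD)⟩

/-- Stabilizing a semi-free dga `(A, ∂)` on generators `S` by adjoining two new
generators `x, y` with `∂'x = y`, `∂'y = 0` does not change linearized homology: for any
augmentation `ε'` of the stabilization `(A', ∂')`, the linearized homology of `(A', ∂')`
w.r.t. `ε'` is isomorphic to that of `(A, ∂)` w.r.t. the restriction `ε = ε' ∘ incl`.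
Here the stabilized generating set is `S ⊕ Bool`, with `x` (resp. `y`) the generator
indexed by `Sum.inr true` (resp. `Sum.inr false`). -/
theorem linearized_homology_invariant_under_stabilization
    {S : Type*}
    (incl : SemiFreeAlg S →ₐ[ZMod 2] SemiFreeAlg (S ⊕ Bool))
    (hincl : ∀ a : S, incl (genOf a) = genOf (Sum.inl a))
    (d : SemiFreeAlg S →ₗ[ZMod 2] SemiFreeAlg S)
    (d' : SemiFreeAlg (S ⊕ Bool) →ₗ[ZMod 2] SemiFreeAlg (S ⊕ Bool))
    (hLeib : ∀ x y, d (x * y) = d x * y + x * d y)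
    (hLeib' : ∀ x y, d' (x * y) = d' x * y + x * d' y)
    (hd2 : ∀ x, d (d x) = 0) (hd'2 : ∀ x, d' (d' x) = 0)
    (hx : d' (genOf (Sum.inr true)) = genOf (Sum.inr false))
    (hy : d' (genOf (Sum.inr false)) = 0)
    (hcompat : ∀ x, d' (incl x) = incl (d x))
    (ε' : SemiFreeAlg (S ⊕ Bool) →ₐ[ZMod 2] ZMod 2)
    (hε' : ∀ x, ε' (d' x) = 0)
    (φ : SemiFreeAlg S ≃ₐ[ZMod 2] SemiFreeAlg S)
    (hφ : ∀ a : S, φ (genOf a)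
        = genOf a + algebraMap (ZMod 2) (SemiFreeAlg S) (ε' (incl (genOf a))))
    (φ' : SemiFreeAlg (S ⊕ Bool) ≃ₐ[ZMod 2] SemiFreeAlg (S ⊕ Bool))
    (hφ' : ∀ a : S ⊕ Bool, φ' (genOf a)
        = genOf a + algebraMap (ZMod 2) (SemiFreeAlg (S ⊕ Bool)) (ε' (genOf a))) :
    Nonempty
      (lhomology (projOne (S ⊕ Bool) ∘ₗ φ'.toLinearMap ∘ₗ d' ∘ₗ embOne (S ⊕ Bool))
        ≃ₗ[ZMod 2]
       lhomology (projOne S ∘ₗ φ.toLinearMap ∘ₗ d ∘ₗ embOne S)) :=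
  linearized_homology_invariant_under_stabilization_general incl hincl d d' hx hy hcompat ε' hε' φ
    hφ φ' hφ'
end
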